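/- arXiv:2212.12265 — 3 statements merged into one kernel-verified Lean document; each statement's English description precedes it below -/
import Mathlib

section
/- Let φ : C1 → C2 be an F[x]-module isomorphism of convolutional codes, let c_1,…,c_k be an F[x]-basis of C1, and set t = max{deg(c_1),…,deg(c_k),deg(φ(c_1)),…,deg(φ(c_k))}. If φ is a j-equivalence for some j ≥ t, then φ is an equivalence. -/
open Polynomial

namespace ConvCode

variable {F : Type*} [Field F] [Fintype F] {n k : ℕ}

/-- Weight of a polynomial vector: total number of nonzero coefficients. -/
noncomputable def wtv (c : Fin n → Polynomial F) : ℕ := ∑ ℓ, (c ℓ).support.card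

/-- Truncation of a polynomial, keeping the coefficients of degrees `h` through `j`. -/
noncomputable def truncp (h j : ℕ) (p : Polynomial F) : Polynomial F :=
  ∑ i ∈ Finset.Icc h j, Polynomial.C (p.coeff i) * Polynomial.X ^ i

/-- Truncation `c_{[h,j]}` of a polynomial vector. -/
noncomputable def truncv (h j : ℕ) (c : Fin n → Polynomial F) : Fin n → Polynomial F :=
  fun ℓ => truncp h j (c ℓ)

/-- Degree of a polynomial vector: the largest `i` such that `c[i] ≠ 0`. -/
def degv (c : Fin n → Polynomial F) : ℕ := Finset.univ.sup fun ℓ => (c ℓ).natDegree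

/-- `φ` is a `j`-equivalence: it preserves weights of `j`-th truncations. -/
def IsJEquiv (C1 C2 : Submodule (Polynomial F) (Fin n → Polynomial F))
    (φ : C1 ≃ₗ[Polynomial F] C2) (j : ℕ) : Prop :=
  ∀ c : C1, wtv (truncv 0 j (c : Fin n → Polynomial F)) =
    wtv (truncv 0 j ((φ c : C2) : Fin n → Polynomial F))

/-- `φ` is an equivalence: it is a `j`-equivalence for every `j`. -/
def IsEquiv (C1 C2 : Submodule (Polynomial F) (Fin n → Polynomial F))
    (φ : C1 ≃ₗ[Polynomial F] C2) : Prop := ∀ j : ℕ, IsJEquiv C1 C2 φ j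

/-- `φ` is an isometry: it preserves weights. -/
def IsIsometry (C1 C2 : Submodule (Polynomial F) (Fin n → Polynomial F))
    (φ : C1 ≃ₗ[Polynomial F] C2) : Prop :=
  ∀ c : C1, wtv (c : Fin n → Polynomial F) = wtv ((φ c : C2) : Fin n → Polynomial F)

/-- `G` is a generator matrix of `C`: its rows form an `F[x]`-basis of `C`. -/
def IsGenMat (C : Submodule (Polynomial F) (Fin n → Polynomial F))
    (G : Matrix (Fin k) (Fin n) (Polynomial F)) : Prop :=
  LinearIndependent (Polynomial F) (fun i => G i) ∧
    Submodule.span (Polynomial F) (Set.range fun i => G i) = C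

/-- `G` is row reduced: its leading row coefficient matrix has full rank. -/
def RowReduced (G : Matrix (Fin k) (Fin n) (Polynomial F)) : Prop :=
  LinearIndependent F (fun i => fun ℓ => (G i ℓ).coeff (degv (G i)))

/-- `C` is noncatastrophic: it has a generator matrix with a polynomial right inverse
whose constant term has rank `k`. -/
def Noncatastrophic (C : Submodule (Polynomial F) (Fin n → Polynomial F)) (k : ℕ) : Prop :=
  ∃ G : Matrix (Fin k) (Fin n) (Polynomial F), IsGenMat C G ∧
    (∃ H : Matrix (Fin n) (Fin k) (Polynomial F), G * H = 1) ∧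
    LinearIndependent F (fun i => fun ℓ => (G i ℓ).eval 0)

/-- Joint support of a family of polynomial vectors: the pairs `(ℓ, i)` such that the
coefficient of `x^i` in the `ℓ`-th coordinate of some member is nonzero. -/
def gsupp {r : ℕ} (d : Fin r → Fin n → Polynomial F) : Set (Fin n × ℕ) :=
  { q | ∃ s, ((d s) q.1).coeff q.2 ≠ 0 }

/-- The `(r,j)`-generalized column distance of the code generated by `G`. -/
noncomputable def gcdJ (G : Matrix (Fin k) (Fin n) (Polynomial F)) (r j : ℕ) : ℕ :=
  sInf { m | ∃ p : Fin r → Fin k → Polynomial F,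
    LinearIndependent F (fun s => fun l => (p s l).eval 0) ∧
    m = (gsupp fun s => truncv 0 j (Matrix.vecMul (p s) G)).ncard }

/-- The `r`-generalized column distance: the limit as `j → ∞` of the `(r,j)`-generalized
column distances. -/
noncomputable def gcdLim (G : Matrix (Fin k) (Fin n) (Polynomial F)) (r : ℕ) : ℕ :=
  Filter.limsup (fun j => gcdJ G r j) Filter.atTop

/-- Evaluation at `0`, as an `F`-linear map `F[x]^n → F^n`. -/
noncomputable def ev0 : (Fin n → Polynomial F) →ₗ[F] (Fin n → F) :=
  LinearMap.pi fun ℓ => (Polynomial.aeval (0 : F)).toLinearMap.comp (LinearMap.proj ℓ)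

/-- `C[0] = {c(0) : c ∈ C} ⊆ F^n`. -/
noncomputable def evalZero (C : Submodule (Polynomial F) (Fin n → Polynomial F)) :
    Submodule F (Fin n → F) := (C.restrictScalars F).map ev0

/-- The `r`-th generalized Hamming weight of a block code `L ⊆ F^n`. -/
noncomputable def hammingGW (L : Submodule F (Fin n → F)) (r : ℕ) : ℕ :=
  sInf { m | ∃ V : Submodule F (Fin n → F), V ≤ L ∧ Module.finrank F V = r ∧
    m = { ℓ : Fin n | ∃ v ∈ V, v ℓ ≠ 0 }.ncard }

/-- The `r`-th generalized weight of a convolutional code. -/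
noncomputable def genWt (C : Submodule (Polynomial F) (Fin n → Polynomial F)) (r : ℕ) : ℕ :=
  sInf { m | ∃ d : Fin r → Fin n → Polynomial F, (∀ s, d s ∈ C) ∧
    (r : Cardinal) ≤ Module.rank (Polynomial F)
      ↥(Submodule.span (Polynomial F) (Set.range d)) ∧
    m = (gsupp d).ncard }

/-- The free distance of a convolutional code. -/
noncomputable def dfree (C : Submodule (Polynomial F) (Fin n → Polynomial F)) : ℕ :=
  sInf { m | ∃ c : Fin n → Polynomial F, c ∈ C ∧ c ≠ 0 ∧ m = wtv c }

end ConvCode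

open ConvCode
open Finset

/-!
The weight of `c_{[0,J]}` is `∑_{i ≤ J} wt_H(c[i])`, so it suffices that `φ` preserves the weight
of every coefficient vector `c[i]`. Multiplying by `x^(j-J)` shows that `φ` is a `J`-equivalence
for every `J ≤ j`, which settles `i ≤ j`. For `i = h + j`, write `c = ∑ f_s b_s` and put
`d = ∑ (f_s div x^h) b_s ∈ C1`: since the `b_s` and the `φ b_s` have degree at most `j`, the
remainders of the `f_s` do not reach degree `h + j`, so `d[j] = c[h+j]` and `(φ d)[j] = (φ c)[h+j]`.
-/

namespace Polynomial

variable {R : Type*} [Ring R] [Nontrivial R]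

theorem coeff_divByMonic_X_pow_mul {q : R[X]} {j : ℕ} (hq : q.natDegree ≤ j) (p : R[X]) (h : ℕ) :
    ((p /ₘ X ^ h) * q).coeff j = (p * q).coeff (h + j) := by
  conv_rhs => rw [← modByMonic_add_div p (X ^ h)]
  have hrem : (p %ₘ X ^ h * q).coeff (h + j) = 0 := by
    rw [coeff_mul]
    refine sum_eq_zero fun ⟨a, b⟩ hab => ?_
    rw [HasAntidiagonal.mem_antidiagonal] at hab
    rcases lt_or_ge a h with ha | ha
    · rw [coeff_eq_zero_of_natDegree_lt (p := q) (by omega), mul_zero]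
    · rw [coeff_eq_zero_of_degree_lt (p := p %ₘ X ^ h), zero_mul]
      calc _ < _ := degree_modByMonic_lt p (monic_X_pow h)
        _ ≤ _ := by rw [degree_X_pow]; exact_mod_cast ha
  rw [add_mul, coeff_add, hrem, mul_assoc, coeff_X_pow_mul', if_pos (by omega), zero_add,
    Nat.add_sub_cancel_left]

end Polynomial

namespace ConvCode

open scoped Classical

variable {F : Type*} [Field F] {n : ℕ}

/-- The coefficient `c[i] ∈ F^n` of `c = ∑ c[i] x^i`. -/
def coeffVec (c : Fin n → F[X]) (i : ℕ) : Fin n → F := fun ℓ => (c ℓ).coeff i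

theorem wtv_truncv_zero (j : ℕ) (c : Fin n → F[X]) :
    wtv (truncv 0 j c) = ∑ i ∈ range (j + 1), hammingNorm (coeffVec c i) := by
  have hsupp (p : F[X]) : (truncp 0 j p).support = {i ∈ range (j + 1) | p.coeff i ≠ 0} := by
    ext i
    simp [truncp, finsetSum_coeff, coeff_C_mul, coeff_X_pow]
  simp only [wtv, truncv, hsupp, card_filter]
  rw [Finset.sum_comm]
  exact sum_congr rfl fun i _ => (card_filter _ _).symm

theorem coeffVec_X_pow_smul_add (m : ℕ) (c : Fin n → F[X]) (i : ℕ) :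
    coeffVec ((X : F[X]) ^ m • c) (m + i) = coeffVec c i := by
  ext ℓ
  simp [coeffVec, coeff_X_pow_mul']

theorem coeffVec_X_pow_smul_of_lt {m i : ℕ} (hi : i < m) (c : Fin n → F[X]) :
    coeffVec ((X : F[X]) ^ m • c) i = 0 := by
  ext ℓ
  simp [coeffVec, coeff_X_pow_mul', hi.not_ge]

theorem wtv_truncv_X_pow_smul {m j : ℕ} (hm : m ≤ j) (c : Fin n → F[X]) :
    wtv (truncv 0 j ((X : F[X]) ^ m • c)) = wtv (truncv 0 (j - m) c) := by
  obtain ⟨j, rfl⟩ := Nat.exists_eq_add_of_le hm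
  rw [wtv_truncv_zero, wtv_truncv_zero, add_assoc, sum_range_add, Nat.add_sub_cancel_left,
    sum_eq_zero fun i hi => by rw [coeffVec_X_pow_smul_of_lt (mem_range.mp hi), hammingNorm_zero]]
  simp only [coeffVec_X_pow_smul_add, zero_add]

theorem natDegree_le_of_degv_le {c : Fin n → F[X]} {j : ℕ} (hc : degv c ≤ j) (ℓ : Fin n) :
    (c ℓ).natDegree ≤ j :=
  (Finset.sup_le_iff.mp hc) ℓ (mem_univ ℓ)

theorem coeffVec_map_sum_divByMonic {M ι : Type*} [AddCommGroup M] [Module F[X] M] [Fintype ι]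
    (u : M →ₗ[F[X]] Fin n → F[X]) (b : Module.Basis ι F[X] M) {j : ℕ}
    (hb : ∀ s, degv (u (b s)) ≤ j) (c : M) (h : ℕ) :
    coeffVec (u (∑ s, (b.repr c s /ₘ X ^ h) • b s)) j = coeffVec (u c) (h + j) := by
  ext ℓ
  conv_rhs => rw [← b.sum_repr c]
  simp only [coeffVec, map_sum, map_smul, Finset.sum_apply, Pi.smul_apply, smul_eq_mul,
    finsetSum_coeff]
  exact sum_congr rfl fun s _ =>
    coeff_divByMonic_X_pow_mul (natDegree_le_of_degv_le (hb s) ℓ) _ h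

variable {C1 C2 : Submodule F[X] (Fin n → F[X])} {φ : C1 ≃ₗ[F[X]] C2}

theorem IsJEquiv.of_le {j J : ℕ} (hφ : IsJEquiv C1 C2 φ j) (hJ : J ≤ j) : IsJEquiv C1 C2 φ J := by
  intro c
  have := hφ ((X : F[X]) ^ (j - J) • c)
  rwa [map_smul, Submodule.coe_smul, Submodule.coe_smul, wtv_truncv_X_pow_smul (j.sub_le J),
    wtv_truncv_X_pow_smul (j.sub_le J), Nat.sub_sub_self hJ] at this

theorem IsJEquiv.hammingNorm_coeffVec_eq {j i : ℕ} (hφ : IsJEquiv C1 C2 φ j) (hi : i ≤ j)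
    (c : C1) :
    hammingNorm (coeffVec (c : Fin n → F[X]) i) =
      hammingNorm (coeffVec (φ c : Fin n → F[X]) i) := by
  have hsum := (hφ.of_le hi) c
  rw [wtv_truncv_zero, wtv_truncv_zero, sum_range_succ, sum_range_succ] at hsum
  cases i with
  | zero => simpa using hsum
  | succ i =>
    have hprev := (hφ.of_le (i.le_succ.trans hi)) c
    rw [wtv_truncv_zero, wtv_truncv_zero] at hprev
    omega

theorem isEquiv_of_hammingNorm_coeffVec_eq
    (hφ : ∀ (c : C1) i,
      hammingNorm (coeffVec (c : Fin n → F[X]) i) = hammingNorm (coeffVec (φ c : Fin n → F[X]) i)) :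
    IsEquiv C1 C2 φ := fun j c => by
  rw [wtv_truncv_zero, wtv_truncv_zero]
  exact sum_congr rfl fun i _ => hφ c i

end ConvCode

theorem jEquiv_ge_t_is_equiv_general {F : Type*} [Field F] {n k : ℕ}
    (C1 C2 : Submodule (Polynomial F) (Fin n → Polynomial F))
    (φ : C1 ≃ₗ[Polynomial F] C2) (b : Module.Basis (Fin k) (Polynomial F) C1) (j : ℕ)
    (ht : Finset.univ.sup (fun i => max (degv ((b i : C1) : Fin n → Polynomial F))
      (degv ((φ (b i) : C2) : Fin n → Polynomial F))) ≤ j)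
    (hφ : IsJEquiv C1 C2 φ j) :
    IsEquiv C1 C2 φ := by
  have hdeg s := max_le_iff.mp (Finset.sup_le_iff.mp ht s (mem_univ s))
  refine isEquiv_of_hammingNorm_coeffVec_eq fun c i => ?_
  rcases le_or_gt i j with hi | hi
  · exact hφ.hammingNorm_coeffVec_eq hi c
  obtain ⟨h, rfl⟩ : ∃ h, i = h + j := ⟨i - j, by omega⟩
  set d : C1 := ∑ s, (b.repr c s /ₘ X ^ h) • b s
  have hd := coeffVec_map_sum_divByMonic C1.subtype b (fun s => (hdeg s).1) c h
  have hφd :=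
    coeffVec_map_sum_divByMonic (C2.subtype ∘ₗ φ.toLinearMap) b (fun s => (hdeg s).2) c h
  simp only [Submodule.subtype_apply, LinearMap.comp_apply, LinearEquiv.coe_coe] at hd hφd
  rw [← hd, ← hφd]
  exact hφ.hammingNorm_coeffVec_eq le_rfl d

/-- if `φ` is a `j`-equivalence for some `j ≥ t`, where `t` is the maximum of the
degrees of the elements of a basis of `C1` and of their images, then `φ` is an equivalence. -/
theorem jEquiv_ge_t_is_equiv {F : Type*} [Field F] [Fintype F] {n k : ℕ}
    (C1 C2 : Submodule (Polynomial F) (Fin n → Polynomial F))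
    (φ : C1 ≃ₗ[Polynomial F] C2) (b : Module.Basis (Fin k) (Polynomial F) C1) (j : ℕ)
    (ht : Finset.univ.sup (fun i => max (degv ((b i : C1) : Fin n → Polynomial F))
      (degv ((φ (b i) : C2) : Fin n → Polynomial F))) ≤ j)
    (hφ : IsJEquiv C1 C2 φ j) :
    IsEquiv C1 C2 φ :=
  jEquiv_ge_t_is_equiv_general C1 C2 φ b j ht hφ
end

section
/- Let φ : C1 → C2 be a j-equivalence of convolutional codes in F[x]^n. Then there exist an n×n permutation matrix P over F and a diagonal matrix D = diag(a_1,…,a_n) with a_1,…,a_n ∈ F\{0} such that φ(c)_{[0,j]} = (c_{[0,j]})PD for all c ∈ C1. -/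
open Polynomial

open ConvCode

/-!
Write `λ_{ℓ,i}(c)` for the coefficient of `x^i` in `c_ℓ`; it is an `F`-linear functional on `C1`,
and so is `λ'_{ℓ,i} = λ_{ℓ,i} ∘ φ`. The hypothesis says that at every `c` the two families
`(λ_{ℓ,i})_{i ≤ j}` and `(λ'_{ℓ,i})_{i ≤ j}` have equally many nonzero values. Summing additive
characters, as in the proof of the MacWilliams extension theorem, shows that two such families
coincide as multisets of functionals up to nonzero scalars. Applying this also at `x · c`, which
shifts the window of degrees down by one, and cancelling, the top-degree families `(λ_{ℓ,j})_ℓ`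
and `(λ'_{ℓ,j})_ℓ` agree up to scalars after a permutation `σ`. Precomposing with multiplication
by `x^{j-i}` carries this relation down to every degree `i ≤ j`.
-/

open Finset Module

theorem Finset.map_univ_val_eq_sum_singleton {α β : Type*} [Fintype α] (f : α → β) :
    univ.val.map f = ∑ a, {f a} := by
  rw [← Multiset.sum_map_singleton (univ.val.map f), Multiset.map_map]
  rfl

theorem exists_perm_comp_eq_of_map_univ_eq {α β : Type*} [Fintype α] {f g : α → β}
    (h : univ.val.map f = univ.val.map g) : ∃ σ : Equiv.Perm α, ∀ a, f (σ a) = g a := by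
  classical
  have hfiber : ∀ b, Fintype.card {a // g a = b} = Fintype.card {a // f a = b} := fun b => by
    simpa [Fintype.card_subtype, Multiset.count_map, eq_comm, Finset.card_def]
      using (congrArg (Multiset.count b) h).symm
  exact ⟨Equiv.ofFiberEquiv fun b => Fintype.equivOfCardEq (hfiber b), Equiv.ofFiberEquiv_map _⟩

open scoped Classical in
theorem MulAction.card_smul_eq_mul_card_mem_orbit {G α W : Type*} [Group G] [Fintype G]
    [MulAction G α] [Fintype W] (θ : W → α) (ν : α) :
    #{p : W × G | p.2 • θ p.1 = ν} = #{g : G | g • ν = ν} * #{w | θ w ∈ orbit G ν} := by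
  have hfiber : ∀ w, #{g : G | g • θ w = ν} =
      if θ w ∈ orbit G ν then #{g : G | g • ν = ν} else 0 := by
    intro w
    split_ifs with hw
    · obtain ⟨s, hs⟩ := hw
      rw [← hs]
      exact card_equiv (Equiv.mulRight s) (by simp [mul_smul])
    · exact card_eq_zero.2 (filter_eq_empty_iff.2 fun g _ hg => hw ⟨g⁻¹, by simp [← hg]⟩)
  rw [card_filter, Fintype.sum_prod_type]
  simp_rw [← card_filter, hfiber]
  rw [← sum_filter, sum_const, smul_eq_mul, mul_comm]

section

variable {F : Type*} [Field F] {ψ : AddChar F ℂ}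

theorem sum_addChar_dual_apply_of_ne_zero (hψ : ψ.IsPrimitive) {U : Type*} [AddCommGroup U]
    [Module F U] [Fintype U] {ρ : Dual F U} (hρ : ρ ≠ 0) : ∑ u, ψ (ρ u) = 0 := by
  obtain ⟨a, ha⟩ := AddChar.ne_one_iff.1 (by simpa using hψ one_ne_zero)
  obtain ⟨u, rfl⟩ := LinearMap.surjective hρ a
  exact AddChar.sum_eq_zero_of_ne_one (ψ := ψ.compAddMonoidHom ρ.toAddMonoidHom)
    (AddChar.ne_one_iff.2 ⟨u, ha⟩)

variable [Fintype F] [DecidableEq F]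

theorem sum_units_addChar_mul (hψ : ψ.IsPrimitive) (a : F) :
    ∑ t : Fˣ, ψ (t * a) = (if a = 0 then (Fintype.card F : ℂ) else 0) - 1 := by
  have hunits : ∑ t : Fˣ, ψ (t * a) = ∑ x ∈ univ.erase 0, ψ (x * a) :=
    sum_bij (fun t _ => (t : F)) (fun t _ => by simp) (fun _ _ _ _ h => Units.val_injective h)
      (fun x hx => ⟨Units.mk0 x (ne_of_mem_erase hx), mem_univ _, rfl⟩) (fun _ _ => rfl)
  have hall := AddChar.sum_mulShift a hψ
  rw [← add_sum_erase _ _ (mem_univ 0), ← hunits] at hall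
  push_cast at hall
  simp only [zero_mul, AddChar.map_zero_eq_one] at hall
  linear_combination hall

variable {W : Type*} [Fintype W] {U : Type*} [AddCommGroup U] [Module F U]

theorem sum_sum_units_addChar_mul (hψ : ψ.IsPrimitive) (θ : W → Dual F U) (u : U) :
    ∑ w, ∑ t : Fˣ, ψ (t * θ w u) = Fintype.card F * #{w | θ w u = 0} - Fintype.card W := by
  simp only [sum_units_addChar_mul hψ, sum_sub_distrib, sum_ite, sum_const_zero, sum_const,
    card_univ, nsmul_eq_mul]
  ring

theorem card_smul_eq_mul_sum_addChar (hψ : ψ.IsPrimitive) [Fintype U] (θ : W → Dual F U)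
    (ν : Dual F U) :
    (#{p : W × Fˣ | p.2 • θ p.1 = ν} : ℂ) * Fintype.card U =
      ∑ u, (∑ w, ∑ t : Fˣ, ψ (t * θ w u)) * ψ (-ν u) := by
  have hterm : ∀ p : W × Fˣ, ∑ u, ψ ((p.2 • θ p.1 - ν) u) =
      if p.2 • θ p.1 = ν then (Fintype.card U : ℂ) else 0 := by
    intro p
    split_ifs with hp
    · simp [hp]
    · exact sum_addChar_dual_apply_of_ne_zero hψ (sub_ne_zero.2 hp)
  calc (#{p : W × Fˣ | p.2 • θ p.1 = ν} : ℂ) * Fintype.card U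
      = ∑ p : W × Fˣ, ∑ u, ψ ((p.2 • θ p.1 - ν) u) := by
        simp only [hterm, sum_ite, sum_const_zero, add_zero, sum_const, nsmul_eq_mul]
    _ = ∑ u, (∑ w, ∑ t : Fˣ, ψ (t * θ w u)) * ψ (-ν u) := by
        rw [sum_comm]
        simp [Fintype.sum_prod_type, sum_mul, sub_eq_add_neg, AddChar.map_add_eq_mul,
          Units.smul_def]

theorem card_smul_eq_of_card_ne_zero_eq_of_fintype [Fintype U] {θ θ' : W → Dual F U}
    (h : ∀ u, #{w | θ w u ≠ 0} = #{w | θ' w u ≠ 0}) (ν : Dual F U) :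
    #{p : W × Fˣ | p.2 • θ p.1 = ν} = #{p : W × Fˣ | p.2 • θ' p.1 = ν} := by
  have hψ := AddChar.FiniteField.primitiveChar_to_Complex_isPrimitive F
  have hzero : ∀ u, #{w | θ w u = 0} = #{w | θ' w u = 0} := fun u => by
    have hθ := card_filter_add_card_filter_not (s := univ) (fun w => θ w u = 0)
    have hθ' := card_filter_add_card_filter_not (s := univ) (fun w => θ' w u = 0)
    have hu := h u
    simp only [ne_eq] at hu
    omega
  have hU : (Fintype.card U : ℂ) ≠ 0 := Nat.cast_ne_zero.2 Fintype.card_ne_zero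
  have key : (#{p : W × Fˣ | p.2 • θ p.1 = ν} : ℂ) * Fintype.card U =
      #{p : W × Fˣ | p.2 • θ' p.1 = ν} * Fintype.card U := by
    simp only [card_smul_eq_mul_sum_addChar hψ, sum_sum_units_addChar_mul hψ, hzero]
  exact_mod_cast mul_right_cancel₀ hU key

open scoped Classical in
theorem card_smul_eq_of_card_ne_zero_eq {M : Type*} [AddCommGroup M] [Module F M]
    {θ θ' : W → Dual F M} (h : ∀ m, #{w | θ w m ≠ 0} = #{w | θ' w m ≠ 0}) (ν : Dual F M) :
    #{p : W × Fˣ | p.2 • θ p.1 = ν} = #{p : W × Fˣ | p.2 • θ' p.1 = ν} := by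
  -- All the functionals involved factor through the finite space `U`, where characters can be
  -- summed.
  let Θ : M →ₗ[F] (W → F) × (W → F) × F := (LinearMap.pi θ).prod ((LinearMap.pi θ').prod ν)
  let U := LinearMap.range Θ
  let π : M →ₗ[F] U := Θ.rangeRestrict
  have hπ : Function.Surjective π := Θ.surjective_rangeRestrict
  let _ : Fintype U := Fintype.ofFinite U
  have hlift : ∀ (κ : W → Dual F U) (μ : Dual F U),
      #{p : W × Fˣ | p.2 • (κ p.1).comp π = μ.comp π} = #{p : W × Fˣ | p.2 • κ p.1 = μ} :=
    fun κ μ => by simp_rw [← LinearMap.smul_comp, LinearMap.cancel_right hπ]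
  let κ : W → Dual F U := fun w => (LinearMap.proj w ∘ₗ LinearMap.fst F _ _) ∘ₗ U.subtype
  let κ' : W → Dual F U := fun w =>
    (LinearMap.proj w ∘ₗ LinearMap.fst F _ _ ∘ₗ LinearMap.snd F _ _) ∘ₗ U.subtype
  let μ : Dual F U := (LinearMap.snd F _ _ ∘ₗ LinearMap.snd F _ _) ∘ₗ U.subtype
  calc #{p : W × Fˣ | p.2 • θ p.1 = ν}
      = #{p : W × Fˣ | p.2 • (κ p.1).comp π = μ.comp π} := rfl
    _ = #{p : W × Fˣ | p.2 • (κ' p.1).comp π = μ.comp π} := by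
      rw [hlift, hlift]
      refine card_smul_eq_of_card_ne_zero_eq_of_fintype (fun u => ?_) μ
      obtain ⟨m, rfl⟩ := hπ u
      exact h m
    _ = #{p : W × Fˣ | p.2 • θ' p.1 = ν} := rfl

theorem map_orbitRel_mk_eq_of_card_ne_zero_eq {M : Type*} [AddCommGroup M] [Module F M]
    {θ θ' : W → Dual F M} (h : ∀ m, #{w | θ w m ≠ 0} = #{w | θ' w m ≠ 0}) :
    univ.val.map (fun w => (Quotient.mk'' (θ w) : MulAction.orbitRel.Quotient Fˣ (Dual F M))) =
      univ.val.map (fun w => Quotient.mk'' (θ' w)) := by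
  classical
  ext x
  induction x using Quotient.inductionOn' with | h ν
  have hcount : ∀ κ : W → Dual F M, Multiset.count (Quotient.mk'' ν) (univ.val.map fun w =>
      (Quotient.mk'' (κ w) : MulAction.orbitRel.Quotient Fˣ (Dual F M))) =
        #{w | κ w ∈ MulAction.orbit Fˣ ν} := fun κ => by
    simp only [Multiset.count_map, Quotient.eq'', MulAction.orbitRel_apply,
      MulAction.mem_orbit_symm]
    rfl
  have hstab : 0 < #{t : Fˣ | t • ν = ν} := card_pos.2 ⟨1, by simp⟩
  rw [hcount, hcount]
  refine Nat.eq_of_mul_eq_mul_left hstab ?_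
  rw [← MulAction.card_smul_eq_mul_card_mem_orbit, ← MulAction.card_smul_eq_mul_card_mem_orbit]
  exact card_smul_eq_of_card_ne_zero_eq h ν

end

namespace ConvCode

variable {F : Type*} [Field F] {n : ℕ} {M : Type*} [AddCommGroup M] [Module F[X] M]
  [Module F M] [IsScalarTower F F[X] M]

theorem coeff_truncp_zero (j i : ℕ) (p : F[X]) :
    (truncp 0 j p).coeff i = if i ≤ j then p.coeff i else 0 := by
  simp [truncp, coeff_C_mul, coeff_X_pow]

theorem wtv_truncv_eq_card [DecidableEq F] (j : ℕ) (v : Fin n → F[X]) :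
    wtv (truncv 0 j v) = #{q : Fin n × Fin (j + 1) | (v q.1).coeff q.2 ≠ 0} := by
  have hsupp : ∀ p : F[X], (truncp 0 j p).support = {i ∈ range (j + 1) | p.coeff i ≠ 0} :=
    fun p => by ext i; simp [coeff_truncp_zero]
  simp only [wtv, truncv, hsupp, card_filter, sum_range fun i => if _ then 1 else 0,
    Fintype.sum_prod_type]

noncomputable def coeffDual (g : M →ₗ[F[X]] Fin n → F[X]) (ℓ : Fin n) (i : ℕ) : Dual F M :=
  (lcoeff F i ∘ₗ LinearMap.proj ℓ) ∘ₗ g.restrictScalars F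

@[simp]
theorem coeffDual_apply (g : M →ₗ[F[X]] Fin n → F[X]) (ℓ : Fin n) (i : ℕ) (c : M) :
    coeffDual g ℓ i c = (g c ℓ).coeff i := rfl

theorem coeffDual_X_smul_succ (g : M →ₗ[F[X]] Fin n → F[X]) (ℓ : Fin n) (i : ℕ) :
    coeffDual ((X : F[X]) • g) ℓ (i + 1) = coeffDual g ℓ i := by
  ext c
  simp [coeff_X_mul]

theorem coeffDual_X_smul_zero (g : M →ₗ[F[X]] Fin n → F[X]) (ℓ : Fin n) :
    coeffDual ((X : F[X]) • g) ℓ 0 = 0 := by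
  ext c
  simp

theorem coeff_eq_mul_of_smul_coeffDual_eq {g₁ g₂ : M →ₗ[F[X]] Fin n → F[X]} {m ℓ : Fin n}
    {j i : ℕ} {t : F} (h : t • coeffDual g₁ m j = coeffDual g₂ ℓ j) (hi : i ≤ j) (c : M) :
    (g₂ c ℓ).coeff i = t * (g₁ c m).coeff i := by
  simpa [coeff_X_pow_mul', hi, Nat.sub_sub_self hi] using
    (LinearMap.congr_fun h ((X : F[X]) ^ (j - i) • c)).symm

variable [Fintype F] {g₁ g₂ : M →ₗ[F[X]] Fin n → F[X]} {j : ℕ}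

theorem sum_sum_orbitRel_mk_coeffDual_eq
    (h : ∀ c, wtv (truncv 0 j (g₁ c)) = wtv (truncv 0 j (g₂ c))) :
    (∑ ℓ, ∑ i : Fin (j + 1), {Quotient.mk'' (coeffDual g₁ ℓ i)} :
      Multiset (MulAction.orbitRel.Quotient Fˣ (Dual F M))) =
      ∑ ℓ, ∑ i : Fin (j + 1), {Quotient.mk'' (coeffDual g₂ ℓ i)} := by
  classical
  have hwindow := map_orbitRel_mk_eq_of_card_ne_zero_eq (W := Fin n × Fin (j + 1))
    (θ := fun q => coeffDual g₁ q.1 q.2) (θ' := fun q => coeffDual g₂ q.1 q.2) fun c => by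
      have hc := h c
      rwa [wtv_truncv_eq_card, wtv_truncv_eq_card] at hc
  simpa only [map_univ_val_eq_sum_singleton, Fintype.sum_prod_type] using hwindow

theorem map_orbitRel_mk_coeffDual_eq
    (h : ∀ c, wtv (truncv 0 j (g₁ c)) = wtv (truncv 0 j (g₂ c))) :
    univ.val.map (fun ℓ =>
      (Quotient.mk'' (coeffDual g₁ ℓ j) : MulAction.orbitRel.Quotient Fˣ (Dual F M))) =
      univ.val.map (fun ℓ => Quotient.mk'' (coeffDual g₂ ℓ j)) := by
  have hX : ∀ c, wtv (truncv 0 j (((X : F[X]) • g₁) c)) =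
      wtv (truncv 0 j (((X : F[X]) • g₂) c)) := fun c => by
    simpa only [LinearMap.smul_apply, ← map_smul] using h ((X : F[X]) • c)
  have hlow := sum_sum_orbitRel_mk_coeffDual_eq hX
  have htop := sum_sum_orbitRel_mk_coeffDual_eq h
  simp only [Fin.sum_univ_succ, sum_add_distrib, Fin.val_zero, Fin.val_succ,
    coeffDual_X_smul_zero, coeffDual_X_smul_succ, add_right_inj] at hlow
  simp only [Fin.sum_univ_castSucc, sum_add_distrib, Fin.val_castSucc, Fin.val_last, hlow,
    add_right_inj] at htop
  simpa only [map_univ_val_eq_sum_singleton] using htop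

theorem exists_perm_truncp_eq_C_mul_of_wtv_truncv_eq
    (h : ∀ c, wtv (truncv 0 j (g₁ c)) = wtv (truncv 0 j (g₂ c))) :
    ∃ (σ : Equiv.Perm (Fin n)) (a : Fin n → F), (∀ ℓ, a ℓ ≠ 0) ∧
      ∀ c ℓ, truncp 0 j (g₂ c ℓ) = C (a ℓ) * truncp 0 j (g₁ c (σ ℓ)) := by
  obtain ⟨σ, hσ⟩ := exists_perm_comp_eq_of_map_univ_eq (map_orbitRel_mk_coeffDual_eq h)
  have hunit : ∀ ℓ, ∃ t : Fˣ, t • coeffDual g₁ (σ ℓ) j = coeffDual g₂ ℓ j := fun ℓ =>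
    MulAction.mem_orbit_symm.1 (Quotient.eq''.1 (hσ ℓ))
  choose t ht using hunit
  refine ⟨σ, fun ℓ => t ℓ, fun ℓ => (t ℓ).ne_zero, fun c ℓ => Polynomial.ext fun i => ?_⟩
  rw [coeff_C_mul, coeff_truncp_zero, coeff_truncp_zero]
  split_ifs with hi
  · exact coeff_eq_mul_of_smul_coeffDual_eq (ht ℓ) hi c
  · rw [mul_zero]

end ConvCode

/-- partial characterization of `j`-equivalences: there exist a permutation matrix
and an invertible diagonal matrix over `F` such that `φ(c)_{[0,j]} = (c_{[0,j]})PD`, i.e.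
`(φ(c)_{[0,j]})_ℓ = a_ℓ · (c_{[0,j]})_{σ(ℓ)}` for all `c ∈ C1` and all coordinates `ℓ`. -/
theorem jEquiv_shape {F : Type*} [Field F] [Fintype F] {n : ℕ}
    (C1 C2 : Submodule (Polynomial F) (Fin n → Polynomial F))
    (φ : C1 ≃ₗ[Polynomial F] C2) (j : ℕ) (hφ : IsJEquiv C1 C2 φ j) :
    ∃ (σ : Equiv.Perm (Fin n)) (a : Fin n → F), (∀ ℓ, a ℓ ≠ 0) ∧
      ∀ c : C1, ∀ ℓ : Fin n,
        truncp 0 j (((φ c : C2) : Fin n → Polynomial F) ℓ) =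
          Polynomial.C (a ℓ) * truncp 0 j ((c : Fin n → Polynomial F) (σ ℓ)) :=
  exists_perm_truncp_eq_C_mul_of_wtv_truncv_eq (g₁ := C1.subtype)
    (g₂ := C2.subtype ∘ₗ φ.toLinearMap) hφ
end

section
/- Let C be a noncatastrophic convolutional code in F[x]^n of rank k with generator matrix G, and let 1 ≤ r ≤ k. Then d^r(C) = min{ |supp{p_1G,…,p_rG}| : p_1,…,p_r ∈ F[x]^k with dim_F span(p_1(0),…,p_r(0)) = r }. -/
/-!
Truncation only shrinks supports, so every `d_j^r` is at most the untruncated minimum `μ`.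
Conversely, a noncatastrophic code's generator matrix `G` has a polynomial right inverse `H`;
bound the degrees of the entries of `G` and `H` by `γ` and `δ`. If `j ≥ μ (δ + γ)` and the
truncated codewords `(p_s G)_{[0,j]}` have fewer than `μ` support positions, then some window
of degrees `(a, a + δ + γ] ⊆ [0, j]` carries none of them. The words `q_s = (p_s G)_{[0,a]} H`
then satisfy `q_s(0) = p_s(0)`, and `q_s G = (p_s G)_{[0,a]}` because `(p_s G) H G = p_s G` and
`q_s G` has degree at most `a + δ + γ`; this contradicts the minimality of `μ`. Hence `d_j^r = μ`
for all large `j`.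
-/

open Polynomial

namespace ConvCode

open Matrix

section PolynomialMatrix

variable {R : Type*} [Semiring R] {m o : Type*} [Fintype m]

lemma natDegree_vecMul_le {v : m → R[X]} {M : Matrix m o R[X]} {a b : ℕ}
    (hv : ∀ i, (v i).natDegree ≤ a) (hM : ∀ i j, (M i j).natDegree ≤ b) (j : o) :
    (vecMul v M j).natDegree ≤ a + b :=
  natDegree_sum_le_of_forall_le _ _ fun i _ => natDegree_mul_le_of_le (hv i) (hM i j)

lemma dvd_vecMul {x : R} {v : m → R} (M : Matrix m o R) (hv : ∀ i, x ∣ v i) (j : o) :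
    x ∣ vecMul v M j :=
  Finset.dvd_sum fun i _ => (hv i).mul_right _

lemma exists_natDegree_le [Fintype o] (M : Matrix m o R[X]) :
    ∃ d, ∀ i j, (M i j).natDegree ≤ d :=
  ⟨Finset.univ.sup fun i => Finset.univ.sup fun j => (M i j).natDegree, fun i j =>
    Finset.le_sup_of_le (Finset.mem_univ i)
      (Finset.le_sup (f := fun j => (M i j).natDegree) (Finset.mem_univ j))⟩

end PolynomialMatrix

lemma exists_block_disjoint (S : Finset ℕ) {M : ℕ} (hS : S.card < M) (g : ℕ) :
    ∃ t < M, ∀ i ∈ S, i ≤ t * g ∨ t * g + g < i := by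
  obtain ⟨t, ht, htS⟩ := Finset.exists_mem_notMem_of_card_lt_card
    (s := S.image fun i => (i - 1) / g) (t := Finset.range M)
    (Finset.card_image_le.trans_lt (by rwa [Finset.card_range]))
  refine ⟨t, Finset.mem_range.1 ht, fun i hi => ?_⟩
  by_contra! hblock
  -- an `i` in the block `(t g, t g + g]` has `(i - 1) / g = t`
  refine htS (Finset.mem_image.2 ⟨i, hi, Nat.div_eq_of_lt_le ?_ ?_⟩)
  · omega
  · rw [add_mul, one_mul]
    omega

variable {F : Type*} [Field F] {n k : ℕ}

lemma coeff_truncp (h j i : ℕ) (p : F[X]) :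
    (truncp h j p).coeff i = if h ≤ i ∧ i ≤ j then p.coeff i else 0 := by
  simp only [truncp, finsetSum_coeff, coeff_C_mul, coeff_X_pow, mul_ite, mul_one, mul_zero,
    Finset.sum_ite_eq, Finset.mem_Icc]

lemma natDegree_truncp_le (h j : ℕ) (p : F[X]) : (truncp h j p).natDegree ≤ j :=
  natDegree_sum_le_of_forall_le _ _ fun i hi =>
    (natDegree_C_mul_X_pow_le _ i).trans (Finset.mem_Icc.1 hi).2

lemma X_pow_dvd_sub_truncp {p : F[X]} {a N : ℕ} (h : ∀ i, a < i → i < N → p.coeff i = 0) :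
    X ^ N ∣ p - truncp 0 a p := by
  refine X_pow_dvd_iff.2 fun i hi => ?_
  rw [coeff_sub, coeff_truncp]
  split_ifs with hia
  · exact sub_self _
  · rw [h i (by omega) hi, sub_zero]

lemma mem_gsupp_truncv {r j : ℕ} {d : Fin r → Fin n → F[X]} {q : Fin n × ℕ} :
    q ∈ gsupp (fun s => truncv 0 j (d s)) ↔ q.2 ≤ j ∧ q ∈ gsupp d := by
  by_cases h : q.2 ≤ j <;> simp [gsupp, truncv, coeff_truncp, h]

lemma gsupp_truncv_subset {r : ℕ} (j : ℕ) (d : Fin r → Fin n → F[X]) :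
    gsupp (fun s => truncv 0 j (d s)) ⊆ gsupp d :=
  fun _ hq => (mem_gsupp_truncv.1 hq).2

lemma gsupp_truncv_mono {r a j : ℕ} (haj : a ≤ j) (d : Fin r → Fin n → F[X]) :
    gsupp (fun s => truncv 0 a (d s)) ⊆ gsupp (fun s => truncv 0 j (d s)) := fun _ hq =>
  mem_gsupp_truncv.2 ⟨(mem_gsupp_truncv.1 hq).1.trans haj, (mem_gsupp_truncv.1 hq).2⟩

lemma gsupp_finite {r : ℕ} (d : Fin r → Fin n → F[X]) : (gsupp d).Finite := by
  refine (Set.finite_iUnion fun s => Set.finite_iUnion fun ℓ =>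
    (d s ℓ).support.finite_toSet.image fun i => (ℓ, i)).subset ?_
  rintro ⟨ℓ, i⟩ ⟨s, hs⟩
  exact Set.mem_iUnion₂.2 ⟨s, ℓ, i, mem_support_iff.2 hs, rfl⟩

lemma exists_mul_eq_one_of_isGenMat {C : Submodule F[X] (Fin n → F[X])}
    {G : Matrix (Fin k) (Fin n) F[X]} (hG : IsGenMat C G) (hC : Noncatastrophic C k) :
    ∃ H : Matrix (Fin n) (Fin k) F[X], G * H = 1 := by
  obtain ⟨G', hG', ⟨H', hGH'⟩, -⟩ := hC
  have hrow : ∀ i, ∃ v : Fin k → F[X], ∑ j, v j • G j = G' i := fun i =>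
    (Submodule.mem_span_range_iff_exists_fun F[X]).1
      (hG.2 ▸ hG'.2 ▸ Submodule.subset_span ⟨i, rfl⟩)
  choose V hV using hrow
  have hG'V : G' = of V * G := by
    refine Matrix.ext fun i ℓ => ?_
    simpa [Matrix.mul_apply, Finset.sum_apply] using (congrFun (hV i) ℓ).symm
  -- square matrices over a commutative ring are Dedekind-finite
  have hVG : of V * (G * H') = 1 := by rw [← Matrix.mul_assoc, ← hG'V, hGH']
  exact ⟨H' * of V, by rw [← Matrix.mul_assoc, mul_eq_one_comm.1 hVG]⟩

section RightInverse

variable {G : Matrix (Fin k) (Fin n) F[X]} {H : Matrix (Fin n) (Fin k) F[X]}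

lemma eval_zero_vecMul_truncv (hGH : G * H = 1) (p : Fin k → F[X]) (a : ℕ) (l : Fin k) :
    (vecMul (truncv 0 a (vecMul p G)) H l).eval 0 = (p l).eval 0 := by
  have hdvd : X ^ (a + 1) ∣ vecMul (vecMul p G - truncv 0 a (vecMul p G)) H l :=
    dvd_vecMul H (fun ℓ => X_pow_dvd_sub_truncp fun i hai hi => by omega) l
  rw [sub_vecMul, vecMul_vecMul, hGH, vecMul_one] at hdvd
  have h0 := X_dvd_iff.1 ((dvd_pow_self X (Nat.succ_ne_zero a)).trans hdvd)
  rwa [Pi.sub_apply, coeff_sub, sub_eq_zero, coeff_zero_eq_eval_zero,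
    coeff_zero_eq_eval_zero, eq_comm] at h0

lemma vecMul_truncv_vecMul_eq {γ δ : ℕ} (hGH : G * H = 1)
    (hG : ∀ i ℓ, (G i ℓ).natDegree ≤ γ) (hH : ∀ ℓ i, (H ℓ i).natDegree ≤ δ)
    (p : Fin k → F[X]) {a : ℕ}
    (hgap : ∀ ℓ i, a < i → i ≤ a + δ + γ → (vecMul p G ℓ).coeff i = 0) :
    vecMul (vecMul (truncv 0 a (vecMul p G)) H) G = truncv 0 a (vecMul p G) := by
  have hc : vecMul (vecMul (vecMul p G) H) G = vecMul p G := by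
    rw [vecMul_vecMul p G H, hGH, vecMul_one]
  set c := vecMul p G
  -- `c - c_{[0,a]}` starts in degree `a + δ + γ + 1`, hence so does its image under `H G`.
  have hdvd : ∀ ℓ, X ^ (a + δ + γ + 1) ∣ c ℓ - vecMul (vecMul (truncv 0 a c) H) G ℓ := by
    intro ℓ
    have h := dvd_vecMul G (dvd_vecMul H (v := c - truncv 0 a c) (fun ℓ' =>
      X_pow_dvd_sub_truncp (N := a + δ + γ + 1) fun i hai hi => hgap ℓ' i hai (by omega))) ℓ
    rwa [sub_vecMul, sub_vecMul, hc] at h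
  ext ℓ i
  rcases le_or_gt i (a + δ + γ) with hi | hi
  · have h := X_pow_dvd_iff.1 (hdvd ℓ) i (by omega)
    rw [coeff_sub, sub_eq_zero] at h
    rw [← h, truncv, coeff_truncp]
    split_ifs with hia
    · rfl
    · exact hgap ℓ i (by omega) hi
  · have hdeg : (vecMul (vecMul (truncv 0 a c) H) G ℓ).natDegree ≤ a + δ + γ :=
      natDegree_vecMul_le (natDegree_vecMul_le (fun ℓ => natDegree_truncp_le 0 a _) hH) hG ℓ
    rw [coeff_eq_zero_of_natDegree_lt (hdeg.trans_lt hi), truncv,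
      coeff_eq_zero_of_natDegree_lt ((natDegree_truncp_le 0 a _).trans_lt (by omega))]

end RightInverse

noncomputable def gcdUntrunc (G : Matrix (Fin k) (Fin n) F[X]) (r : ℕ) : ℕ :=
  sInf { m | ∃ p : Fin r → Fin k → F[X],
    LinearIndependent F (fun s => fun l => (p s l).eval 0) ∧
    m = (gsupp fun s => vecMul (p s) G).ncard }

lemma gcdJ_le_gcdUntrunc (G : Matrix (Fin k) (Fin n) F[X]) (r j : ℕ) :
    gcdJ G r j ≤ gcdUntrunc G r := by
  by_cases hP : ∃ p : Fin r → Fin k → F[X], LinearIndependent F fun s l => (p s l).eval 0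
  swap
  · simp [gcdJ, not_exists.1 hP]
  obtain ⟨p₀, hp₀⟩ := hP
  obtain ⟨p, hp, hmin⟩ : gcdUntrunc G r ∈ _ := Nat.sInf_mem ⟨_, p₀, hp₀, rfl⟩
  calc gcdJ G r j ≤ (gsupp fun s => truncv 0 j (vecMul (p s) G)).ncard :=
        Nat.sInf_le ⟨p, hp, rfl⟩
    _ ≤ (gsupp fun s => vecMul (p s) G).ncard :=
      Set.ncard_le_ncard (gsupp_truncv_subset j _) (gsupp_finite _)
    _ = gcdUntrunc G r := hmin.symm

lemma exists_coeff_gap {r j g M : ℕ} {d : Fin r → Fin n → F[X]}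
    (hM : (gsupp fun s => truncv 0 j (d s)).ncard < M) (hj : M * g ≤ j) :
    ∃ a, a + g ≤ j ∧ ∀ s ℓ i, a < i → i ≤ a + g → (d s ℓ).coeff i = 0 := by
  have hfin := gsupp_finite fun s => truncv 0 j (d s)
  obtain ⟨t, htM, hblock⟩ := exists_block_disjoint (hfin.toFinset.image Prod.snd)
    (Finset.card_image_le.trans_lt (by rwa [← Set.ncard_eq_toFinset_card _ hfin])) g
  have htj : t * g + g ≤ j := by
    have := Nat.mul_le_mul_right g (Nat.succ_le_of_lt htM)
    rw [Nat.succ_mul] at this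
    omega
  refine ⟨t * g, htj, fun s ℓ i hi₁ hi₂ => ?_⟩
  by_contra hne
  have hmem : (ℓ, i) ∈ gsupp fun s => truncv 0 j (d s) :=
    mem_gsupp_truncv.2 ⟨by omega, s, hne⟩
  have := hblock i (Finset.mem_image.2 ⟨(ℓ, i), hfin.mem_toFinset.2 hmem, rfl⟩)
  omega

lemma gcdUntrunc_le_gcdJ {G : Matrix (Fin k) (Fin n) F[X]} {H : Matrix (Fin n) (Fin k) F[X]}
    {γ δ : ℕ} (hGH : G * H = 1) (hG : ∀ i ℓ, (G i ℓ).natDegree ≤ γ)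
    (hH : ∀ ℓ i, (H ℓ i).natDegree ≤ δ) (r : ℕ) {j : ℕ}
    (hj : gcdUntrunc G r * (δ + γ) ≤ j) :
    gcdUntrunc G r ≤ gcdJ G r j := by
  by_cases hP : ∃ p : Fin r → Fin k → F[X], LinearIndependent F fun s l => (p s l).eval 0
  swap
  · simp [gcdUntrunc, not_exists.1 hP]
  obtain ⟨p₀, hp₀⟩ := hP
  refine le_csInf ⟨_, p₀, hp₀, rfl⟩ ?_
  rintro _ ⟨p, hp, rfl⟩
  by_contra! hlt
  obtain ⟨a, haj, hgap⟩ := exists_coeff_gap hlt hj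
  set q := fun s => vecMul (truncv 0 a (vecMul (p s) G)) H
  have hq : LinearIndependent F fun s l => (q s l).eval 0 := by
    simpa only [q, eval_zero_vecMul_truncv hGH] using hp
  have hqG : (fun s => vecMul (q s) G) = fun s => truncv 0 a (vecMul (p s) G) :=
    funext fun s => vecMul_truncv_vecMul_eq hGH hG hH (p s) fun ℓ i hi₁ hi₂ =>
      hgap s ℓ i hi₁ (by omega)
  have hμq : gcdUntrunc G r ≤ (gsupp fun s => vecMul (q s) G).ncard := Nat.sInf_le ⟨q, hq, rfl⟩
  rw [hqG] at hμq
  exact (hμq.trans (Set.ncard_le_ncard (gsupp_truncv_mono (by omega) _) (gsupp_finite _))).not_gt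
    hlt

end ConvCode

open ConvCode

theorem gcdLim_eq_untruncated_min_general {F : Type*} [Field F] {n k : ℕ}
    (C : Submodule (Polynomial F) (Fin n → Polynomial F))
    (hNC : Noncatastrophic C k)
    (G : Matrix (Fin k) (Fin n) (Polynomial F)) (hG : IsGenMat C G)
    (r : ℕ) :
    gcdLim G r = sInf { m | ∃ p : Fin r → Fin k → Polynomial F,
      LinearIndependent F (fun s => fun l => (p s l).eval 0) ∧
      m = (gsupp fun s => Matrix.vecMul (p s) G).ncard } := by
  obtain ⟨H, hGH⟩ := exists_mul_eq_one_of_isGenMat hG hNC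
  obtain ⟨γ, hγ⟩ := exists_natDegree_le G
  obtain ⟨δ, hδ⟩ := exists_natDegree_le H
  have hconst : (fun j => gcdJ G r j) =ᶠ[Filter.atTop] fun _ => gcdUntrunc G r :=
    Filter.eventually_atTop.2 ⟨gcdUntrunc G r * (δ + γ), fun j hj =>
      (gcdJ_le_gcdUntrunc G r j).antisymm (gcdUntrunc_le_gcdJ hGH hγ hδ r hj)⟩
  exact (Filter.limsup_congr hconst).trans (Filter.limsup_const _)

/-- for a noncatastrophic code, the `r`-generalized column distance is the
minimum of `|supp{p_1 G, …, p_r G}|` over `p_1, …, p_r ∈ F[x]^k` whose evaluations at `0`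
are linearly independent. -/
theorem gcdLim_eq_untruncated_min {F : Type*} [Field F] [Fintype F] {n k : ℕ}
    (C : Submodule (Polynomial F) (Fin n → Polynomial F))
    (hk : 1 ≤ k) (hkn : k ≤ n) (hNC : Noncatastrophic C k)
    (G : Matrix (Fin k) (Fin n) (Polynomial F)) (hG : IsGenMat C G)
    (r : ℕ) (hr : 1 ≤ r) (hrk : r ≤ k) :
    gcdLim G r = sInf { m | ∃ p : Fin r → Fin k → Polynomial F,
      LinearIndependent F (fun s => fun l => (p s l).eval 0) ∧
      m = (gsupp fun s => Matrix.vecMul (p s) G).ncard } :=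
  gcdLim_eq_untruncated_min_general C hNC G hG r
end
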